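/- Let l ≥ 1, e ∈ ℤ_{>1}, k ∈ ℤ_{>0}, let λ = (λ^0,…,λ^{l−1}) be an l-partition and let s = (s_0,…,s_{l−1}) ∈ ℤ^l with s_0 ≤ s_1 ≤ ⋯ ≤ s_{l−1} ≤ s_0 + e. Fix m ∈ ℤ_{>0} with m + s_c ≥ 1 and λ^c_{m+s_c} = 0 for all c, and set X^c := {λ^c_j − j + s_c + 1 : 1 ≤ j ≤ m + s_c}. For x ∈ X^c set N_k(x) := #{t : 0 ≤ t ≤ l−1, x − ke ∉ X^t and x − ke > −m}. Then the number of elements of the multiset H(λ) of charged hook lengths, counted with multiplicity, that are equal to ke or to −ke equals ∑_{c=0}^{l−1} ∑_{x ∈ X^c} N_k(x). -/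
import Mathlib


/-- A partition, encoded as a nonincreasing eventually-zero sequence of naturals;
`part i` is the `(i+1)`-st part `λ_{i+1}`. -/
structure IntPartition where
  part : ℕ → ℕ
  antitone : Antitone part
  eventually_zero : ∃ N : ℕ, ∀ i, N ≤ i → part i = 0

namespace IntPartition

/-- `conj p k` is the `(k+1)`-st part `λ'_{k+1} = #{I ≥ 1 : λ_I ≥ k+1}` of the conjugate. -/
noncomputable def conj (p : IntPartition) (k : ℕ) : ℕ :=
  Set.ncard {i : ℕ | k < p.part i}

end IntPartition

/-- Generalised hook length `h^{λ,μ}_{i+1,j+1} = λ_{i+1} - (i+1) + μ'_{j+1} - (j+1) + 1`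
of the (0-indexed) node `(i,j)`. -/
noncomputable def hookLen (p q : IntPartition) (i j : ℕ) : ℤ :=
  (p.part i : ℤ) + q.conj j - i - j - 1

/-- Charged hook length `ch^{a,b}_{c,d} = h^{λ^a,λ^b}_{c,d} + s_a - s_b` (0-indexed node). -/
noncomputable def chargedHook {l : ℕ} (lam : Fin l → IntPartition) (s : Fin l → ℤ)
    (a b : Fin l) (i j : ℕ) : ℤ :=
  hookLen (lam a) (lam b) i j + s a - s b

/-- The charged β-numbers `X = {λ_j − j + s + 1 : 1 ≤ j ≤ m + s}`. -/
def betaFinset (p : IntPartition) (s : ℤ) (m : ℕ) : Finset ℤ :=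
  (Finset.range ((m : ℤ) + s).toNat).image (fun j : ℕ => (p.part j : ℤ) - j + s)

/-- The abacus `L_s(λ) = {λ_j − j + s + 1 : j ∈ ℤ_{>0}}`. -/
def abacusSet (p : IntPartition) (s : ℤ) : Set ℤ :=
  {x : ℤ | ∃ j : ℕ, x = (p.part j : ℤ) - j + s}

namespace Stmt9

open Finset
open scoped Classical

lemma part_eq_zero (p : IntPartition) {N i : ℕ} (h : p.part N = 0) (hi : N ≤ i) :
    p.part i = 0 := Nat.le_zero.1 (h ▸ p.antitone hi)

lemma conj_set_finite (p : IntPartition) (k : ℕ) : {i : ℕ | k < p.part i}.Finite := by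
  obtain ⟨N, hN⟩ := p.eventually_zero
  apply Set.Finite.subset (Set.finite_Iio N)
  intro i hi
  simp only [Set.mem_setOf_eq] at hi
  by_contra hc
  simp only [Set.mem_Iio, not_lt] at hc
  have := hN i hc
  omega

lemma lt_conj_iff (p : IntPartition) (k i : ℕ) : i < p.conj k ↔ k < p.part i := by
  have hfin := conj_set_finite p k
  constructor
  · intro h
    by_contra hc
    push_neg at hc
    have hsub : {i' : ℕ | k < p.part i'} ⊆ Set.Iio i := by
      intro j hj
      simp only [Set.mem_setOf_eq] at hj
      simp only [Set.mem_Iio]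
      by_contra hji
      push_neg at hji
      have := p.antitone hji
      omega
    have := Set.ncard_le_ncard hsub (Set.finite_Iio i)
    rw [← Finset.coe_Iio, Set.ncard_coe_finset, Nat.card_Iio] at this
    exact absurd h (by unfold IntPartition.conj; omega)
  · intro h
    have hsub : Set.Iic i ⊆ {i' : ℕ | k < p.part i'} := by
      intro j hj
      simp only [Set.mem_Iic] at hj
      have := p.antitone hj
      simp only [Set.mem_setOf_eq]
      omega
    have := Set.ncard_le_ncard hsub hfin
    rw [← Finset.coe_Iic, Set.ncard_coe_finset, Nat.card_Iic] at this
    unfold IntPartition.conj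
    omega


lemma conj_anti (p : IntPartition) : Antitone p.conj := by
  intro a b hab
  by_contra hc
  push_neg at hc
  have h2 : b < p.part (p.conj a) := (lt_conj_iff p b _).1 hc
  have h3 : a < p.part (p.conj a) := by omega
  have := (lt_conj_iff p a _).2 h3
  omega

lemma conj_eq_zero (p : IntPartition) {j : ℕ} (h : p.part 0 ≤ j) : p.conj j = 0 := by
  by_contra hc
  have : 0 < p.conj j := Nat.pos_of_ne_zero hc
  have := (lt_conj_iff p j 0).1 this
  omega

/-- bead positions -/
noncomputable def xfun (p : IntPartition) (s : ℤ) (i : ℕ) : ℤ := (p.part i : ℤ) - i + s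

/-- nonbead positions -/
noncomputable def ufun (p : IntPartition) (s : ℤ) (j : ℕ) : ℤ := (j : ℤ) + 1 - p.conj j + s

lemma xfun_strictAnti (p : IntPartition) (s : ℤ) : StrictAnti (xfun p s) := by
  apply strictAnti_nat_of_succ_lt
  intro n
  have := p.antitone (by omega : n ≤ n + 1)
  unfold xfun
  push_cast
  omega

lemma ufun_strictMono (p : IntPartition) (s : ℤ) : StrictMono (ufun p s) := by
  apply strictMono_nat_of_lt_succ
  intro n
  have := conj_anti p (by omega : n ≤ n + 1)
  unfold ufun
  push_cast
  omega

lemma xfun_ne_ufun (p : IntPartition) (s : ℤ) (i j : ℕ) : xfun p s i ≠ ufun p s j := by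
  have hiff := lt_conj_iff p j i
  unfold xfun ufun
  by_cases h : j < p.part i
  · have h2 : i < p.conj j := hiff.2 h
    intro hc
    push_cast at hc
    omega
  · have h2 : ¬ (i < p.conj j) := fun hc => h (hiff.1 hc)
    intro hc
    push_cast at hc
    omega

lemma node_iff (p : IntPartition) (s : ℤ) (i j : ℕ) :
    j < p.part i ↔ ufun p s j < xfun p s i := by
  have hiff := lt_conj_iff p j i
  unfold xfun ufun
  constructor
  · intro h
    have h1 : i < p.conj j := hiff.2 h
    have h2 : (i : ℤ) + 1 ≤ (p.conj j : ℤ) := by exact_mod_cast h1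
    have h3 : (j : ℤ) + 1 ≤ (p.part i : ℤ) := by exact_mod_cast h
    omega
  · intro h
    by_contra hc
    push_neg at hc
    have h1 : ¬ (i < p.conj j) := fun hx => absurd (hiff.1 hx) (by omega)
    have h2 : (p.conj j : ℤ) ≤ i := by
      have h4 : p.conj j ≤ i := by omega
      exact_mod_cast h4
    have h3 : (p.part i : ℤ) ≤ j := by exact_mod_cast hc
    omega

lemma mem_abacus_iff_xfun (p : IntPartition) (s : ℤ) (z : ℤ) :
    z ∈ abacusSet p s ↔ ∃ i, xfun p s i = z := by
  unfold abacusSet xfun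
  constructor
  · rintro ⟨j, hj⟩; exact ⟨j, hj.symm⟩
  · rintro ⟨i, hi⟩; exact ⟨i, hi.symm⟩

lemma notMem_abacus_iff (p : IntPartition) (s : ℤ) (z : ℤ) :
    z ∉ abacusSet p s ↔ ∃ j, ufun p s j = z := by
  constructor
  · intro hz
    rw [mem_abacus_iff_xfun] at hz
    push_neg at hz
    have hex : ∃ i : ℕ, xfun p s i < z := by
      refine ⟨((p.part 0 : ℤ) + s - z + 1).toNat, ?_⟩
      have h1 : ((p.part 0 : ℤ) + s - z + 1) ≤ (((p.part 0 : ℤ) + s - z + 1).toNat : ℤ) :=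
        Int.self_le_toNat _
      have h2 : p.part (((p.part 0 : ℤ) + s - z + 1).toNat) ≤ p.part 0 :=
        p.antitone (Nat.zero_le _)
      have h3 : ((p.part (((p.part 0 : ℤ) + s - z + 1).toNat) : ℤ)) ≤ (p.part 0 : ℤ) := by
        exact_mod_cast h2
      unfold xfun
      omega
    classical
    set i0 := Nat.find hex with hi0def
    have hi0 : xfun p s i0 < z := Nat.find_spec hex
    cases hcase : i0 with
    | zero =>
      rw [hcase] at hi0
      have hz0 : (p.part 0 : ℤ) + s < z := by unfold xfun at hi0; push_cast at hi0; omega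
      refine ⟨(z - s - 1).toNat, ?_⟩
      have hge : (0:ℤ) ≤ z - s - 1 := by have := Int.ofNat_nonneg (p.part 0); omega
      have htn : (((z - s - 1).toNat : ℤ)) = z - s - 1 := Int.toNat_of_nonneg hge
      have hconj : p.conj ((z - s - 1).toNat) = 0 := by
        apply conj_eq_zero
        have h5 : (p.part 0 : ℤ) ≤ ((z - s - 1).toNat : ℤ) := by omega
        exact_mod_cast h5
      unfold ufun
      rw [hconj]
      push_cast
      omega
    | succ i =>
      rw [hcase] at hi0
      have hnot : ¬ (xfun p s i < z) := by
        have := Nat.find_min hex (m := i) (by omega)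
        simpa using this
      push_neg at hnot
      have hzi : z < xfun p s i := lt_of_le_of_ne hnot (fun hc => hz i hc.symm)
      have hA : (p.part (i+1) : ℤ) - (i+1) + s < z := by
        unfold xfun at hi0; push_cast at hi0; push_cast; omega
      have hB : z < (p.part i : ℤ) - i + s := by
        unfold xfun at hzi; push_cast at hzi; omega
      refine ⟨(z - s + i).toNat, ?_⟩
      have hge : (0:ℤ) ≤ z - s + i := by have := Int.ofNat_nonneg (p.part (i+1)); push_cast at hA; omega
      have htn : (((z - s + i).toNat : ℤ)) = z - s + i := Int.toNat_of_nonneg hge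
      set j := (z - s + i).toNat with hjdef
      have hj1 : (j:ℤ) < (p.part i : ℤ) := by omega
      have hj2 : (p.part (i+1) : ℤ) ≤ (j:ℤ) := by push_cast at hA ⊢; omega
      have hj1' : j < p.part i := by exact_mod_cast hj1
      have hj2' : p.part (i+1) ≤ j := by exact_mod_cast hj2
      have hc1 : i < p.conj j := (lt_conj_iff p j i).2 hj1'
      have hc2 : ¬ (i + 1 < p.conj j) := fun hx => by
        have := (lt_conj_iff p j (i+1)).1 hx; omega
      have hconj : p.conj j = i + 1 := by omega
      unfold ufun
      rw [hconj]
      push_cast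
      omega
  · rintro ⟨j, hj⟩
    rw [mem_abacus_iff_xfun]
    rintro ⟨i, hi⟩
    exact xfun_ne_ufun p s i j (by rw [hi, hj])

lemma chargedHook_eq {l : ℕ} (lam : Fin l → IntPartition) (s : Fin l → ℤ)
    (a b : Fin l) (i j : ℕ) :
    chargedHook lam s a b i j = xfun (lam a) (s a) i - ufun (lam b) (s b) j := by
  unfold chargedHook hookLen xfun ufun
  push_cast
  ring

lemma strictMono_lb (V : ℕ → ℤ) (hV : StrictMono V) : ∀ j : ℕ, V 0 + j ≤ V j := by
  intro j
  induction j with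
  | zero => simp
  | succ n ih =>
    have := hV (by omega : n < n + 1)
    push_cast
    omega

lemma path_lemma (U V : ℕ → ℤ) (hU : StrictMono U) (hV : StrictMono V)
    (J Q : ℕ) (hJQ : J ≤ Q) (hdom : ∀ j, J ≤ j → U j ≤ V j) :
    ((Finset.range Q).filter (fun j => V j < U j ∧ ∀ i, U i ≠ V j)).card
    = ((Finset.range Q).filter (fun j => V j < U j ∧ ∀ i, V i ≠ U j)).card := by
  set lo : ℤ := min (V 0) (U 0) - 1 with hlo
  set hi : ℤ := max (V J) (U J) with hhi
  have hVlb := strictMono_lb V hV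
  have hUlb := strictMono_lb U hU
  have hlohi : lo < hi := by
    have h1 : V 0 ≤ V J := hV.monotone (Nat.zero_le J)
    have h2 : U 0 ≤ U J := hU.monotone (Nat.zero_le J)
    omega
  set n : ℕ := (hi - lo).toNat with hn
  have hnz : (n : ℤ) = hi - lo := Int.toNat_of_nonneg (by omega)
  set K : ℕ := Q + n + 1 with hK
  -- counting functions
  set pV : ℤ → ℕ := fun z => (((range K)).filter (fun j => V j = z)).card with hpV
  set pU : ℤ → ℕ := fun z => (((range K)).filter (fun j => U j = z)).card with hpU
  set aF : ℤ → ℕ := fun z => (((range K)).filter (fun j => V j ≤ z)).card with haF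
  set bF : ℤ → ℕ := fun z => (((range K)).filter (fun j => U j ≤ z)).card with hbF
  set g : ℤ → ℤ := fun z => (aF z : ℤ) - (bF z : ℤ) with hg
  -- step relation
  have hstepV : ∀ z : ℤ, aF z = aF (z - 1) + pV z := by
    intro z
    simp only [haF, hpV, card_filter]
    rw [← Finset.sum_add_distrib]
    apply Finset.sum_congr rfl
    intro j _
    by_cases h1 : V j = z
    · simp [h1]
    · by_cases h2 : V j ≤ z - 1
      · rw [if_pos (by omega), if_pos h2, if_neg h1]
      · rw [if_neg (by omega), if_neg h2, if_neg h1]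
  have hstepU : ∀ z : ℤ, bF z = bF (z - 1) + pU z := by
    intro z
    simp only [hbF, hpU, card_filter]
    rw [← Finset.sum_add_distrib]
    apply Finset.sum_congr rfl
    intro j _
    by_cases h1 : U j = z
    · simp [h1]
    · by_cases h2 : U j ≤ z - 1
      · rw [if_pos (by omega), if_pos h2, if_neg h1]
      · rw [if_neg (by omega), if_neg h2, if_neg h1]
  have hpVle : ∀ z : ℤ, pV z ≤ 1 := by
    intro z
    simp only [hpV]
    apply Finset.card_le_one.2
    intro a ha b hb
    simp only [mem_filter] at ha hb
    exact hV.injective (ha.2.trans hb.2.symm)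
  have hpUle : ∀ z : ℤ, pU z ≤ 1 := by
    intro z
    simp only [hpU]
    apply Finset.card_le_one.2
    intro a ha b hb
    simp only [mem_filter] at ha hb
    exact hU.injective (ha.2.trans hb.2.symm)
  -- boundary values
  have hglo : g lo = 0 := by
    have h1 : aF lo = 0 := by
      simp only [haF, Finset.card_eq_zero, Finset.filter_eq_empty_iff]
      intro j _
      have := hVlb j
      push_neg
      omega
    have h2 : bF lo = 0 := by
      simp only [hbF, Finset.card_eq_zero, Finset.filter_eq_empty_iff]
      intro j _
      have := hUlb j
      push_neg
      omega
    simp [hg, h1, h2]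
  have hghi : g hi ≤ 0 := by
    have hsub : ((range K)).filter (fun j => V j ≤ hi) ⊆
        ((range K)).filter (fun j => U j ≤ hi) := by
      intro j hj
      simp only [mem_filter] at hj ⊢
      refine ⟨hj.1, ?_⟩
      by_cases hjJ : J ≤ j
      · exact le_trans (hdom j hjJ) hj.2
      · have : U j ≤ U J := hU.monotone (by omega)
        omega
    have h9 := Finset.card_le_card hsub
    simp only [hg, haF, hbF]
    omega
  -- telescoping
  set f : ℕ → ℤ := fun t => ((g (lo + t)).toNat : ℤ) with hf
  have htel : ∑ t ∈ range n, (f (t + 1) - f t) = f n - f 0 := Finset.sum_range_sub f n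
  have hfn : f n = 0 := by
    simp only [hf, hnz]
    have : lo + (hi - lo) = hi := by ring
    rw [this]
    omega
  have hf0 : f 0 = 0 := by simp [hf, hglo]
  -- step identity
  have hstep : ∀ t ∈ range n, f (t + 1) - f t =
      (if 1 ≤ pV (lo + 1 + t) ∧ pU (lo + 1 + t) = 0 ∧ 1 ≤ g (lo + 1 + t) then (1:ℤ) else 0)
      - (if 1 ≤ pU (lo + 1 + t) ∧ pV (lo + 1 + t) = 0 ∧ 0 ≤ g (lo + 1 + t) then (1:ℤ) else 0) := by
    intro t _
    have hz : lo + (↑(t+1) : ℤ) = (lo + 1 + t) := by push_cast; ring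
    have hz2 : lo + 1 + (t:ℤ) - 1 = lo + t := by ring
    have hgstep : g (lo + 1 + t) = g (lo + t) + (pV (lo + 1 + t) : ℤ) - (pU (lo + 1 + t) : ℤ) := by
      have h1 := hstepV (lo + 1 + t)
      have h2 := hstepU (lo + 1 + t)
      rw [hz2] at h1 h2
      simp only [hg]
      omega
    simp only [hf, hz]
    have h3 := hpVle (lo + 1 + t)
    have h4 := hpUle (lo + 1 + t)
    split_ifs <;> omega
  rw [Finset.sum_congr rfl hstep, Finset.sum_sub_distrib, hfn, hf0] at htel
  have e1 : ∑ t ∈ range n, (if 1 ≤ pV (lo + 1 + (t:ℤ)) ∧ pU (lo + 1 + (t:ℤ)) = 0 ∧ 1 ≤ g (lo + 1 + (t:ℤ)) then (1:ℤ) else 0)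
      = (((range n).filter (fun t : ℕ => 1 ≤ pV (lo + 1 + (t:ℤ)) ∧ pU (lo + 1 + (t:ℤ)) = 0 ∧ 1 ≤ g (lo + 1 + (t:ℤ)))).card : ℤ) := by
    rw [Finset.card_filter, Nat.cast_sum]
    apply Finset.sum_congr rfl
    intro t _
    split_ifs <;> simp
  have e2 : ∑ t ∈ range n, (if 1 ≤ pU (lo + 1 + (t:ℤ)) ∧ pV (lo + 1 + (t:ℤ)) = 0 ∧ 0 ≤ g (lo + 1 + (t:ℤ)) then (1:ℤ) else 0)
      = (((range n).filter (fun t : ℕ => 1 ≤ pU (lo + 1 + (t:ℤ)) ∧ pV (lo + 1 + (t:ℤ)) = 0 ∧ 0 ≤ g (lo + 1 + (t:ℤ)))).card : ℤ) := by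
    rw [Finset.card_filter, Nat.cast_sum]
    apply Finset.sum_congr rfl
    intro t _
    split_ifs <;> simp
  have hcards :
      ((range n).filter (fun t : ℕ => 1 ≤ pV (lo + 1 + (t:ℤ)) ∧ pU (lo + 1 + (t:ℤ)) = 0 ∧ 1 ≤ g (lo + 1 + (t:ℤ)))).card
      = ((range n).filter (fun t : ℕ => 1 ≤ pU (lo + 1 + (t:ℤ)) ∧ pV (lo + 1 + (t:ℤ)) = 0 ∧ 0 ≤ g (lo + 1 + (t:ℤ)))).card := by
    omega
  have hU0 : lo + 1 ≤ U 0 := by omega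
  have hV0 : lo + 1 ≤ V 0 := by omega
  have hUbig : ∀ i : ℕ, K ≤ i → hi < U i := by
    intro i hiK
    have h1 := hUlb i
    have h2 : (K:ℤ) ≤ (i:ℤ) := by exact_mod_cast hiK
    omega
  have hVbig : ∀ i : ℕ, K ≤ i → hi < V i := by
    intro i hiK
    have h1 := hVlb i
    have h2 : (K:ℤ) ≤ (i:ℤ) := by exact_mod_cast hiK
    omega
  have hbij1 : ((Finset.range Q).filter (fun j => V j < U j ∧ ∀ i, U i ≠ V j)).card
      = ((range n).filter (fun t : ℕ => 1 ≤ pV (lo + 1 + (t:ℤ)) ∧ pU (lo + 1 + (t:ℤ)) = 0 ∧ 1 ≤ g (lo + 1 + (t:ℤ)))).card := by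
    apply Finset.card_bij (fun j _ => (V j - lo - 1).toNat)
    · intro j hj
      simp only [mem_filter, mem_range] at hj
      obtain ⟨hjQ, hVU, hne⟩ := hj
      have hjJ : j < J := by
        by_contra hc
        push_neg at hc
        exact absurd hVU (not_lt.2 (hdom j hc))
      have hzlo : lo + 1 ≤ V j := by have := hVlb j; omega
      have hzhi : V j ≤ hi := by
        have h1 : V j < V J := hV hjJ
        omega
      have htnat : ((V j - lo - 1).toNat : ℤ) = V j - lo - 1 := Int.toNat_of_nonneg (by omega)
      have hz : lo + 1 + (((V j - lo - 1).toNat : ℕ) : ℤ) = V j := by omega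
      simp only [mem_filter, mem_range]
      refine ⟨by omega, ?_⟩
      rw [hz]
      have hjK : j < K := by omega
      refine ⟨?_, ?_, ?_⟩
      · have hmem : j ∈ (range K).filter (fun i => V i = V j) := by
          simp [hjK]
        simp only [hpV]
        exact Finset.card_pos.2 ⟨j, hmem⟩
      · simp only [hpU, Finset.card_eq_zero, Finset.filter_eq_empty_iff]
        intro i _
        exact hne i
      · have ha : j + 1 ≤ aF (V j) := by
          have hsub : range (j+1) ⊆ (range K).filter (fun i => V i ≤ V j) := by
            intro i hi'
            simp only [mem_range] at hi'
            simp only [mem_filter, mem_range]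
            exact ⟨by omega, hV.monotone (by omega)⟩
          have h2 := Finset.card_le_card hsub
          simp only [Finset.card_range] at h2
          exact h2
        have hb : bF (V j) ≤ j := by
          have hsub : (range K).filter (fun i => U i ≤ V j) ⊆ range j := by
            intro i hi'
            simp only [mem_filter, mem_range] at hi' ⊢
            by_contra hc
            push_neg at hc
            have := hU.monotone hc
            omega
          have h2 := Finset.card_le_card hsub
          simp only [Finset.card_range] at h2
          exact h2
        simp only [hg]
        omega
    · intro j1 h1 j2 h2 heq
      simp only [mem_filter, mem_range] at h1 h2
      have l1 : lo + 1 ≤ V j1 := by have := hVlb j1; omega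
      have l2 : lo + 1 ≤ V j2 := by have := hVlb j2; omega
      have : V j1 = V j2 := by omega
      exact hV.injective this
    · intro t ht
      simp only [mem_filter, mem_range] at ht
      obtain ⟨htn, hp1, hp2, hp3⟩ := ht
      have hzhi : lo + 1 + (t:ℤ) ≤ hi := by omega
      simp only [hpV] at hp1
      obtain ⟨j, hjmem⟩ := Finset.card_pos.1 (by omega : 0 < ((range K).filter (fun i => V i = lo + 1 + (t:ℤ))).card)
      simp only [mem_filter, mem_range] at hjmem
      obtain ⟨hjK, hVj⟩ := hjmem
      have haz : aF (lo + 1 + (t:ℤ)) = j + 1 := by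
        have heqf : (range K).filter (fun i => V i ≤ lo + 1 + (t:ℤ)) = range (j+1) := by
          ext i
          simp only [mem_filter, mem_range]
          constructor
          · rintro ⟨hiK, hle⟩
            by_contra hc
            push_neg at hc
            have := hV (by omega : j < i)
            omega
          · intro hij
            have := hV.monotone (by omega : i ≤ j)
            exact ⟨by omega, by omega⟩
        simp only [haF, heqf, Finset.card_range]
      have hUj : lo + 1 + (t:ℤ) < U j := by
        by_contra hc
        push_neg at hc
        have hsub : range (j+1) ⊆ (range K).filter (fun i => U i ≤ lo + 1 + (t:ℤ)) := by
          intro i hi'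
          simp only [mem_range] at hi'
          simp only [mem_filter, mem_range]
          exact ⟨by omega, le_trans (hU.monotone (by omega)) hc⟩
        have h2 := Finset.card_le_card hsub
        simp only [Finset.card_range] at h2
        simp only [hg, haF, hbF] at hp3
        simp only [haF] at haz
        omega
      have hjJ : j < J := by
        by_contra hc
        push_neg at hc
        have := hdom j hc
        omega
      refine ⟨j, ?_, ?_⟩
      · simp only [mem_filter, mem_range]
        refine ⟨by omega, by omega, ?_⟩
        intro i
        by_cases hiK : i < K
        · simp only [hpU, Finset.card_eq_zero, Finset.filter_eq_empty_iff] at hp2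
          have := hp2 (Finset.mem_range.2 hiK)
          omega
        · have := hUbig i (le_of_not_gt hiK)
          omega
      · omega
  have hbij2 : ((Finset.range Q).filter (fun j => V j < U j ∧ ∀ i, V i ≠ U j)).card
      = ((range n).filter (fun t : ℕ => 1 ≤ pU (lo + 1 + (t:ℤ)) ∧ pV (lo + 1 + (t:ℤ)) = 0 ∧ 0 ≤ g (lo + 1 + (t:ℤ)))).card := by
    apply Finset.card_bij (fun j _ => (U j - lo - 1).toNat)
    · intro j hj
      simp only [mem_filter, mem_range] at hj
      obtain ⟨hjQ, hVU, hne⟩ := hj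
      have hjJ : j < J := by
        by_contra hc
        push_neg at hc
        exact absurd hVU (not_lt.2 (hdom j hc))
      have hzlo : lo + 1 ≤ U j := by have := hUlb j; omega
      have hzhi : U j ≤ hi := by
        have h1 : U j < U J := hU hjJ
        omega
      have htnat : ((U j - lo - 1).toNat : ℤ) = U j - lo - 1 := Int.toNat_of_nonneg (by omega)
      have hz : lo + 1 + (((U j - lo - 1).toNat : ℕ) : ℤ) = U j := by omega
      simp only [mem_filter, mem_range]
      refine ⟨by omega, ?_⟩
      rw [hz]
      have hjK : j < K := by omega
      refine ⟨?_, ?_, ?_⟩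
      · have hmem : j ∈ (range K).filter (fun i => U i = U j) := by
          simp [hjK]
        simp only [hpU]
        exact Finset.card_pos.2 ⟨j, hmem⟩
      · simp only [hpV, Finset.card_eq_zero, Finset.filter_eq_empty_iff]
        intro i _
        exact hne i
      · have ha : j + 1 ≤ aF (U j) := by
          have hsub : range (j+1) ⊆ (range K).filter (fun i => V i ≤ U j) := by
            intro i hi'
            simp only [mem_range] at hi'
            simp only [mem_filter, mem_range]
            have := hV.monotone (by omega : i ≤ j)
            exact ⟨by omega, by omega⟩
          have h2 := Finset.card_le_card hsub
          simp only [Finset.card_range] at h2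
          exact h2
        have hb : bF (U j) ≤ j + 1 := by
          have hsub : (range K).filter (fun i => U i ≤ U j) ⊆ range (j+1) := by
            intro i hi'
            simp only [mem_filter, mem_range] at hi' ⊢
            by_contra hc
            push_neg at hc
            have := hU (by omega : j < i)
            omega
          have h2 := Finset.card_le_card hsub
          simp only [Finset.card_range] at h2
          exact h2
        simp only [hg]
        omega
    · intro j1 h1 j2 h2 heq
      simp only [mem_filter, mem_range] at h1 h2
      have l1 : lo + 1 ≤ U j1 := by have := hUlb j1; omega
      have l2 : lo + 1 ≤ U j2 := by have := hUlb j2; omega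
      have : U j1 = U j2 := by omega
      exact hU.injective this
    · intro t ht
      simp only [mem_filter, mem_range] at ht
      obtain ⟨htn, hp1, hp2, hp3⟩ := ht
      have hzhi : lo + 1 + (t:ℤ) ≤ hi := by omega
      simp only [hpU] at hp1
      obtain ⟨j, hjmem⟩ := Finset.card_pos.1 (by omega : 0 < ((range K).filter (fun i => U i = lo + 1 + (t:ℤ))).card)
      simp only [mem_filter, mem_range] at hjmem
      obtain ⟨hjK, hUj⟩ := hjmem
      have hbz : bF (lo + 1 + (t:ℤ)) = j + 1 := by
        have heqf : (range K).filter (fun i => U i ≤ lo + 1 + (t:ℤ)) = range (j+1) := by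
          ext i
          simp only [mem_filter, mem_range]
          constructor
          · rintro ⟨hiK, hle⟩
            by_contra hc
            push_neg at hc
            have := hU (by omega : j < i)
            omega
          · intro hij
            have := hU.monotone (by omega : i ≤ j)
            exact ⟨by omega, by omega⟩
        simp only [hbF, heqf, Finset.card_range]
      have hVj : V j < lo + 1 + (t:ℤ) := by
        have hne : V j ≠ lo + 1 + (t:ℤ) := by
          intro hc
          simp only [hpV, Finset.card_eq_zero, Finset.filter_eq_empty_iff] at hp2
          exact hp2 (Finset.mem_range.2 hjK) hc
        by_contra hc
        push_neg at hc
        have hsub : (range K).filter (fun i => V i ≤ lo + 1 + (t:ℤ)) ⊆ range j := by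
          intro i hi'
          simp only [mem_filter, mem_range] at hi' ⊢
          by_contra hc2
          push_neg at hc2
          have := hV.monotone hc2
          omega
        have h2 := Finset.card_le_card hsub
        simp only [Finset.card_range] at h2
        simp only [hg, haF, hbF] at hp3
        simp only [hbF] at hbz
        omega
      have hjJ : j < J := by
        by_contra hc
        push_neg at hc
        have := hdom j hc
        omega
      refine ⟨j, ?_, ?_⟩
      · simp only [mem_filter, mem_range]
        refine ⟨by omega, by omega, ?_⟩
        intro i
        by_cases hiK : i < K
        · simp only [hpV, Finset.card_eq_zero, Finset.filter_eq_empty_iff] at hp2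
          have := hp2 (Finset.mem_range.2 hiK)
          omega
        · have := hVbig i (le_of_not_gt hiK)
          omega
      · omega
  exact hbij1.trans (hcards.trans hbij2.symm)


lemma mem_abacus_iff_not_ufun (p : IntPartition) (s : ℤ) (z : ℤ) :
    z ∈ abacusSet p s ↔ ∀ j, ufun p s j ≠ z := by
  rw [← not_iff_not, notMem_abacus_iff]
  push_neg
  simp

lemma core (pa pb : IntPartition) (sa sb : ℤ) (h : ℤ) (hh : 1 ≤ h) (hdel : sa ≤ sb + h)
    (W Q : ℕ)
    (HQ1 : ∀ j i : ℕ, i < W → ufun pb sb j = xfun pa sa i - h → j < Q)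
    (HW1 : ∀ j : ℕ, j < Q → ∀ i : ℕ, xfun pa sa i = ufun pb sb j + h → i < W)
    (HW2 : ∀ j : ℕ, j < Q → ∀ i : ℕ, xfun pb sb i = ufun pa sa j - h → i < W)
    (HJQ : pb.part 0 ≤ Q) :
    (∑ i ∈ range W, ∑ j ∈ range Q,
        if ufun pa sa j < xfun pa sa i ∧ xfun pa sa i - ufun pb sb j = h then 1 else 0)
    + (∑ i ∈ range W, ∑ j ∈ range Q,
        if ufun pb sb j < xfun pb sb i ∧ xfun pb sb i - ufun pa sa j = -h then 1 else 0)
    = ∑ i ∈ range W, if xfun pa sa i - h ∉ abacusSet pb sb then (1:ℕ) else 0 := by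
  -- Step 1: N as double sum
  have step1 : ∑ i ∈ range W, (if (xfun pa sa) i - h ∉ abacusSet pb sb then (1:ℕ) else 0)
      = ∑ i ∈ range W, ∑ j ∈ range Q, (if (ufun pb sb) j = (xfun pa sa) i - h then (1:ℕ) else 0) := by
    apply Finset.sum_congr rfl
    intro i hi
    rw [Finset.mem_range] at hi
    by_cases hmem : (xfun pa sa) i - h ∈ abacusSet pb sb
    · rw [if_neg (by simpa using hmem)]
      symm
      apply Finset.sum_eq_zero
      intro j _
      rw [if_neg]
      intro hc
      rw [mem_abacus_iff_not_ufun] at hmem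
      exact hmem j hc
    · rw [if_pos hmem]
      obtain ⟨j0, hj0⟩ := (notMem_abacus_iff pb sb _).1 hmem
      have hj0Q : j0 < Q := HQ1 j0 i hi hj0
      symm
      have hrw : ∀ j ∈ range Q, (if (ufun pb sb) j = (xfun pa sa) i - h then (1:ℕ) else 0)
          = if j = j0 then 1 else 0 := by
        intro j _
        by_cases hjj : j = j0
        · subst hjj
          rw [if_pos hj0, if_pos rfl]
        · rw [if_neg (fun hc => hjj ((ufun_strictMono pb sb).injective (hc.trans hj0.symm))),
            if_neg hjj]
      rw [Finset.sum_congr rfl hrw, Finset.sum_ite_eq' (range Q) j0 (fun _ => (1:ℕ)),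
        if_pos (Finset.mem_range.2 hj0Q)]
  -- Step 2: split
  have step2 : ∀ i j : ℕ, (if (ufun pb sb) j = (xfun pa sa) i - h then (1:ℕ) else 0)
      = (if (ufun pa sa) j < (xfun pa sa) i ∧ (xfun pa sa) i - (ufun pb sb) j = h then 1 else 0)
        + (if (xfun pa sa) i - (ufun pb sb) j = h ∧ (xfun pa sa) i < (ufun pa sa) j then 1 else 0) := by
    intro i j
    have hne : (xfun pa sa) i ≠ (ufun pa sa) j := xfun_ne_ufun pa sa i j
    split_ifs <;> omega
  -- Step 3: BAD as single sum
  have step3 : ∑ i ∈ range W, ∑ j ∈ range Q, (if (xfun pa sa) i - (ufun pb sb) j = h ∧ (xfun pa sa) i < (ufun pa sa) j then (1:ℕ) else 0)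
      = ∑ j ∈ range Q, (if ((ufun pb sb) j + h ∈ abacusSet pa sa ∧ (ufun pb sb) j + h < (ufun pa sa) j) then (1:ℕ) else 0) := by
    rw [Finset.sum_comm]
    apply Finset.sum_congr rfl
    intro j hj
    rw [Finset.mem_range] at hj
    by_cases hmem : (ufun pb sb) j + h ∈ abacusSet pa sa
    · obtain ⟨i0, hi0⟩ := (mem_abacus_iff_xfun pa sa _).1 hmem
      have hi0W : i0 < W := HW1 j hj i0 hi0
      have hrw : ∀ i ∈ range W, (if (xfun pa sa) i - (ufun pb sb) j = h ∧ (xfun pa sa) i < (ufun pa sa) j then (1:ℕ) else 0)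
          = if i = i0 then (if (ufun pb sb) j + h < (ufun pa sa) j then 1 else 0) else 0 := by
        intro i _
        by_cases hii : i = i0
        · subst hii
          split_ifs <;> omega
        · have : (xfun pa sa) i ≠ (ufun pb sb) j + h :=
            fun hc => hii ((xfun_strictAnti pa sa).injective (hc.trans hi0.symm))
          split_ifs <;> omega
      rw [Finset.sum_congr rfl hrw, Finset.sum_ite_eq' (range W) i0,
        if_pos (Finset.mem_range.2 hi0W)]
      by_cases hlt : (ufun pb sb) j + h < (ufun pa sa) j
      · rw [if_pos hlt, if_pos ⟨hmem, hlt⟩]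
      · rw [if_neg hlt, if_neg (fun hc => hlt hc.2)]
    · rw [if_neg (fun hc => hmem hc.1)]
      apply Finset.sum_eq_zero
      intro i _
      rw [if_neg]
      rintro ⟨hc1, -⟩
      exact hmem ((mem_abacus_iff_xfun pa sa _).2 ⟨i, by omega⟩)
  -- Step 4: TGT as single sum
  have step4 : ∑ i ∈ range W, ∑ j ∈ range Q, (if (ufun pb sb) j < (xfun pb sb) i ∧ (xfun pb sb) i - (ufun pa sa) j = -h then (1:ℕ) else 0)
      = ∑ j ∈ range Q, (if ((ufun pa sa) j - h ∈ abacusSet pb sb ∧ (ufun pb sb) j + h < (ufun pa sa) j) then (1:ℕ) else 0) := by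
    rw [Finset.sum_comm]
    apply Finset.sum_congr rfl
    intro j hj
    rw [Finset.mem_range] at hj
    by_cases hmem : (ufun pa sa) j - h ∈ abacusSet pb sb
    · obtain ⟨i0, hi0⟩ := (mem_abacus_iff_xfun pb sb _).1 hmem
      have hi0W : i0 < W := HW2 j hj i0 hi0
      have hrw : ∀ i ∈ range W, (if (ufun pb sb) j < (xfun pb sb) i ∧ (xfun pb sb) i - (ufun pa sa) j = -h then (1:ℕ) else 0)
          = if i = i0 then (if (ufun pb sb) j + h < (ufun pa sa) j then 1 else 0) else 0 := by
        intro i _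
        by_cases hii : i = i0
        · subst hii
          split_ifs <;> omega
        · have : (xfun pb sb) i ≠ (ufun pa sa) j - h :=
            fun hc => hii ((xfun_strictAnti pb sb).injective (hc.trans hi0.symm))
          split_ifs <;> omega
      rw [Finset.sum_congr rfl hrw, Finset.sum_ite_eq' (range W) i0,
        if_pos (Finset.mem_range.2 hi0W)]
      by_cases hlt : (ufun pb sb) j + h < (ufun pa sa) j
      · rw [if_pos hlt, if_pos ⟨hmem, hlt⟩]
      · rw [if_neg hlt, if_neg (fun hc => hlt hc.2)]
    · rw [if_neg (fun hc => hmem hc.1)]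
      apply Finset.sum_eq_zero
      intro i _
      rw [if_neg]
      rintro ⟨-, hc2⟩
      exact hmem ((mem_abacus_iff_xfun pb sb _).2 ⟨i, by omega⟩)
  -- Step 5: path lemma
  have step5 : ∑ j ∈ range Q, (if ((ufun pb sb) j + h ∈ abacusSet pa sa ∧ (ufun pb sb) j + h < (ufun pa sa) j) then (1:ℕ) else 0)
      = ∑ j ∈ range Q, (if ((ufun pa sa) j - h ∈ abacusSet pb sb ∧ (ufun pb sb) j + h < (ufun pa sa) j) then (1:ℕ) else 0) := by
    have hpath : ((range Q).filter (fun j => (ufun pb sb) j + h < (ufun pa sa) j ∧ ∀ i, (ufun pa sa) i ≠ (ufun pb sb) j + h)).card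
        = ((range Q).filter (fun j => (ufun pb sb) j + h < (ufun pa sa) j ∧ ∀ i, (ufun pb sb) i + h ≠ (ufun pa sa) j)).card := by
      apply path_lemma (ufun pa sa) (fun j => ufun pb sb j + h) (ufun_strictMono pa sa)
        (fun j1 j2 hlt => by simpa using (ufun_strictMono pb sb hlt)) (pb.part 0) Q HJQ
      intro j hjJ
      have hconj : pb.conj j = 0 := conj_eq_zero pb hjJ
      have hca : (0:ℤ) ≤ (pa.conj j : ℤ) := Int.ofNat_nonneg _
      simp only [ufun, hconj]
      push_cast
      omega
    have hl : ∑ j ∈ range Q, (if ((ufun pb sb) j + h ∈ abacusSet pa sa ∧ (ufun pb sb) j + h < (ufun pa sa) j) then (1:ℕ) else 0)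
        = ((range Q).filter (fun j => (ufun pb sb) j + h < (ufun pa sa) j ∧ ∀ i, (ufun pa sa) i ≠ (ufun pb sb) j + h)).card := by
      rw [Finset.card_filter]
      apply Finset.sum_congr rfl
      intro j _
      have hiff := mem_abacus_iff_not_ufun pa sa ((ufun pb sb) j + h)
      by_cases hc : (ufun pb sb) j + h ∈ abacusSet pa sa ∧ (ufun pb sb) j + h < (ufun pa sa) j
      · rw [if_pos hc, if_pos ⟨hc.2, hiff.1 hc.1⟩]
      · rw [if_neg hc, if_neg (fun hc2 => hc ⟨hiff.2 hc2.2, hc2.1⟩)]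
    have hr : ∑ j ∈ range Q, (if ((ufun pa sa) j - h ∈ abacusSet pb sb ∧ (ufun pb sb) j + h < (ufun pa sa) j) then (1:ℕ) else 0)
        = ((range Q).filter (fun j => (ufun pb sb) j + h < (ufun pa sa) j ∧ ∀ i, (ufun pb sb) i + h ≠ (ufun pa sa) j)).card := by
      rw [Finset.card_filter]
      apply Finset.sum_congr rfl
      intro j _
      have hiff := mem_abacus_iff_not_ufun pb sb ((ufun pa sa) j - h)
      by_cases hc : (ufun pa sa) j - h ∈ abacusSet pb sb ∧ (ufun pb sb) j + h < (ufun pa sa) j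
      · rw [if_pos hc, if_pos ⟨hc.2, fun i hci => (hiff.1 hc.1) i (by omega)⟩]
      · rw [if_neg hc, if_neg (fun hc2 => hc ⟨hiff.2 (fun i hci => hc2.2 i (by omega)), hc2.1⟩)]
    rw [hl, hr, hpath]
  have e2 : ∑ i ∈ range W, ∑ j ∈ range Q, (if (ufun pb sb) j = (xfun pa sa) i - h then (1:ℕ) else 0)
      = (∑ i ∈ range W, ∑ j ∈ range Q,
          if (ufun pa sa) j < (xfun pa sa) i ∧ (xfun pa sa) i - (ufun pb sb) j = h then 1 else 0)
        + ∑ i ∈ range W, ∑ j ∈ range Q, (if (xfun pa sa) i - (ufun pb sb) j = h ∧ (xfun pa sa) i < (ufun pa sa) j then (1:ℕ) else 0) := by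
    rw [← Finset.sum_add_distrib]
    apply Finset.sum_congr rfl
    intro i _
    rw [← Finset.sum_add_distrib]
    apply Finset.sum_congr rfl
    intro j _
    exact step2 i j
  rw [step1, e2, step3, step5, ← step4]

lemma abacus_eq_beta (p : IntPartition) (s : ℤ) (m : ℕ) (hm1 : 1 ≤ (m:ℤ) + s)
    (hz0 : p.part (((m:ℤ) + s).toNat - 1) = 0) (z : ℤ) :
    z ∈ abacusSet p s ↔ (z ∈ betaFinset p s m ∨ z ≤ -(m:ℤ)) := by
  set M : ℕ := ((m:ℤ) + s).toNat with hM
  have hMz : (M : ℤ) = (m:ℤ) + s := Int.toNat_of_nonneg (by omega)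
  have hM1 : 1 ≤ M := by omega
  constructor
  · rintro ⟨j, hj⟩
    by_cases hjM : j < M
    · left
      rw [betaFinset, Finset.mem_image]
      exact ⟨j, Finset.mem_range.2 hjM, hj.symm⟩
    · right
      have hp0 : p.part j = 0 := part_eq_zero p hz0 (by omega)
      rw [hj, hp0]
      push_cast
      omega
  · rintro (hz | hz)
    · rw [betaFinset, Finset.mem_image] at hz
      obtain ⟨j, -, hj⟩ := hz
      exact ⟨j, hj.symm⟩
    · refine ⟨(s - z).toNat, ?_⟩
      have hge : (0:ℤ) ≤ s - z := by omega
      have htn : (((s - z).toNat : ℤ)) = s - z := Int.toNat_of_nonneg hge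
      have hp0 : p.part ((s - z).toNat) = 0 := by
        apply part_eq_zero p hz0
        omega
      rw [hp0]
      push_cast
      omega

lemma betaFinset_gt (p : IntPartition) (s : ℤ) (m : ℕ) (hm1 : 1 ≤ (m:ℤ) + s)
    (hz0 : p.part (((m:ℤ) + s).toNat - 1) = 0) {z : ℤ} (hz : z ∈ betaFinset p s m) :
    -(m:ℤ) < z := by
  rw [betaFinset, Finset.mem_image] at hz
  obtain ⟨j, hjm, hj⟩ := hz
  rw [Finset.mem_range] at hjm
  have hMz : ((((m:ℤ) + s).toNat : ℕ) : ℤ) = (m:ℤ) + s := Int.toNat_of_nonneg (by omega)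
  have : (j : ℤ) < (m:ℤ) + s := by
    have : (j:ℤ) < ((((m:ℤ) + s).toNat : ℕ) : ℤ) := by exact_mod_cast hjm
    omega
  have h0 : (0:ℤ) ≤ (p.part j : ℤ) := Int.ofNat_nonneg _
  omega

lemma cond_iff (p : IntPartition) (s : ℤ) (m : ℕ) (hm1 : 1 ≤ (m:ℤ) + s)
    (hz0 : p.part (((m:ℤ) + s).toNat - 1) = 0) (z : ℤ) :
    (z ∉ betaFinset p s m ∧ -(m:ℤ) < z) ↔ z ∉ abacusSet p s := by
  rw [abacus_eq_beta p s m hm1 hz0]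
  constructor
  · rintro ⟨h1, h2⟩ (hc | hc)
    · exact h1 hc
    · omega
  · intro hc
    push_neg at hc
    exact ⟨hc.1, by omega⟩

end Stmt9

open Finset Stmt9

set_option maxHeartbeats 2000000

/-- For fixed `k ≥ 1`, the number of elements of `H(λ)` (with multiplicity) equal to `ke`
or `−ke` equals `∑_c ∑_{x ∈ X^c} N_k(x)`. -/
theorem stmt9 (l : ℕ) (hl : 1 ≤ l) (e : ℕ) (he : 1 < e) (k : ℕ) (hk : 0 < k)
    (lam : Fin l → IntPartition) (s : Fin l → ℤ)
    (hchain : ∀ c d : Fin l, c ≤ d → s c ≤ s d)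
    (hband : s ⟨l - 1, by omega⟩ ≤ s ⟨0, by omega⟩ + e)
    (m : ℕ) (hm : 0 < m)
    (hms : ∀ c, 1 ≤ (m : ℤ) + s c)
    (hzero : ∀ c, (lam c).part (((m : ℤ) + s c).toNat - 1) = 0) :
    Set.ncard {x : Fin l × Fin l × ℕ × ℕ |
        x.2.2.2 < (lam x.1).part x.2.2.1 ∧
          (chargedHook lam s x.1 x.2.1 x.2.2.1 x.2.2.2 = (k : ℤ) * e ∨
            chargedHook lam s x.1 x.2.1 x.2.2.1 x.2.2.2 = -((k : ℤ) * e))}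
      = ∑ c : Fin l, ∑ x ∈ betaFinset (lam c) (s c) m,
          Set.ncard {t : Fin l |
            x - (k : ℤ) * e ∉ betaFinset (lam t) (s t) m ∧ -(m : ℤ) < x - (k : ℤ) * e} := by
  classical
  set h : ℤ := (k:ℤ) * e with hdefh
  have hh : 1 ≤ h := by
    have h1 : (1:ℤ) ≤ (k:ℤ) := by exact_mod_cast hk
    have h2 : (1:ℤ) ≤ (e:ℤ) := by exact_mod_cast (le_of_lt he)
    nlinarith
  have heh : (e:ℤ) ≤ h := by
    have h1 : (1:ℤ) ≤ (k:ℤ) := by exact_mod_cast hk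
    have h2 : (0:ℤ) ≤ (e:ℤ) := by positivity
    nlinarith
  have hdel : ∀ a b : Fin l, s a ≤ s b + h := by
    intro a b
    have ha : s a ≤ s ⟨l-1, by omega⟩ := hchain a ⟨l-1, by omega⟩ (by
      rw [Fin.le_def]
      simp only []
      omega)
    have hb : s ⟨0, by omega⟩ ≤ s b := hchain ⟨0, by omega⟩ b (by
      rw [Fin.le_def]
      simp only []
      omega)
    omega
  set M : Fin l → ℕ := fun c => ((m:ℤ) + s c).toNat with hMdef
  have hMc : ∀ c, (M c : ℤ) = (m:ℤ) + s c := fun c => Int.toNat_of_nonneg (by have := hms c; omega)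
  have hM1 : ∀ c, 1 ≤ M c := by intro c; have := hMc c; have := hms c; omega
  have hpz : ∀ c i, M c - 1 ≤ i → (lam c).part i = 0 := by
    intro c i hi
    exact Stmt9.part_eq_zero (lam c) (hzero c) hi
  set A : ℕ := univ.sup (fun c : Fin l => (s c).natAbs) with hAdef
  set P : ℕ := univ.sup (fun c : Fin l => (lam c).part 0) with hPdef
  set Mm : ℕ := univ.sup M with hMmdef
  set B : ℕ := Mm + P + 2*A + (k*e) + 2 with hBdef
  have hAc : ∀ c, (s c).natAbs ≤ A := by
    intro c
    rw [hAdef]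
    exact Finset.le_sup (f := fun c : Fin l => (s c).natAbs) (Finset.mem_univ c)
  have hPc : ∀ c, (lam c).part 0 ≤ P := by
    intro c
    rw [hPdef]
    exact Finset.le_sup (f := fun c : Fin l => (lam c).part 0) (Finset.mem_univ c)
  have hMmc : ∀ c, M c ≤ Mm := by
    intro c
    rw [hMmdef]
    exact Finset.le_sup (f := M) (Finset.mem_univ c)
  have hPci : ∀ c i, (lam c).part i ≤ P :=
    fun c i => le_trans ((lam c).antitone (Nat.zero_le i)) (hPc c)
  have hconjc : ∀ c j, (lam c).conj j ≤ Mm := by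
    intro c j
    have h0 : (lam c).conj 0 ≤ M c - 1 := by
      by_contra hc
      push_neg at hc
      have := (Stmt9.lt_conj_iff (lam c) 0 (M c - 1)).1 hc
      have := hpz c (M c - 1) le_rfl
      omega
    have h1 : (lam c).conj j ≤ (lam c).conj 0 := Stmt9.conj_anti (lam c) (Nat.zero_le j)
    have := hMmc c
    omega
  have hBz : (B:ℤ) = (Mm:ℤ) + P + 2*A + h + 2 := by
    rw [hBdef, hdefh]
    push_cast
    ring
  -- the per-pair core identity
  have hcore : ∀ a b : Fin l,
      (∑ i ∈ range B, ∑ j ∈ range B,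
        if ufun (lam a) (s a) j < xfun (lam a) (s a) i ∧
            xfun (lam a) (s a) i - ufun (lam b) (s b) j = h then 1 else 0)
      + (∑ i ∈ range B, ∑ j ∈ range B,
        if ufun (lam b) (s b) j < xfun (lam b) (s b) i ∧
            xfun (lam b) (s b) i - ufun (lam a) (s a) j = -h then 1 else 0)
      = ∑ i ∈ range B, if xfun (lam a) (s a) i - h ∉ abacusSet (lam b) (s b) then (1:ℕ) else 0 := by
    intro a b
    apply Stmt9.core (lam a) (lam b) (s a) (s b) h hh (hdel a b) B B
    · -- HQ1
      intro j i hiB heq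
      have e1 := hconjc b j
      have e2 := hPci a i
      have e3 := hAc a
      have e4 := hAc b
      unfold Stmt9.xfun Stmt9.ufun at heq
      have e1' : ((lam b).conj j : ℤ) ≤ (Mm:ℤ) := by exact_mod_cast e1
      have e2' : ((lam a).part i : ℤ) ≤ (P:ℤ) := by exact_mod_cast e2
      have hjB : (j:ℤ) < (B:ℤ) := by
        have hc0 : (0:ℤ) ≤ ((lam b).conj j : ℤ) := Int.ofNat_nonneg _
        have hi0 : (0:ℤ) ≤ (i:ℤ) := Int.ofNat_nonneg _
        omega
      exact_mod_cast hjB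
    · -- HW1
      intro j hjQ i heq
      have e1 := hconjc b j
      have e2 := hPci a i
      have e3 := hAc a
      have e4 := hAc b
      unfold Stmt9.xfun Stmt9.ufun at heq
      have e1' : ((lam b).conj j : ℤ) ≤ (Mm:ℤ) := by exact_mod_cast e1
      have e2' : ((lam a).part i : ℤ) ≤ (P:ℤ) := by exact_mod_cast e2
      have hiB : (i:ℤ) < (B:ℤ) := by
        have hc0 : (0:ℤ) ≤ ((lam b).conj j : ℤ) := Int.ofNat_nonneg _
        have hj0 : (0:ℤ) ≤ (j:ℤ) := Int.ofNat_nonneg _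
        omega
      exact_mod_cast hiB
    · -- HW2
      intro j hjQ i heq
      have e1 := hconjc a j
      have e2 := hPci b i
      have e3 := hAc a
      have e4 := hAc b
      unfold Stmt9.xfun Stmt9.ufun at heq
      have e1' : ((lam a).conj j : ℤ) ≤ (Mm:ℤ) := by exact_mod_cast e1
      have e2' : ((lam b).part i : ℤ) ≤ (P:ℤ) := by exact_mod_cast e2
      have hiB : (i:ℤ) < (B:ℤ) := by
        have hc0 : (0:ℤ) ≤ ((lam a).conj j : ℤ) := Int.ofNat_nonneg _
        have hj0 : (0:ℤ) ≤ (j:ℤ) := Int.ofNat_nonneg _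
        omega
      exact_mod_cast hiB
    · -- HJQ
      have := hPc b
      omega
  -- LHS conversion
  have hLset : {x : Fin l × Fin l × ℕ × ℕ |
      x.2.2.2 < (lam x.1).part x.2.2.1 ∧
        (chargedHook lam s x.1 x.2.1 x.2.2.1 x.2.2.2 = h ∨
          chargedHook lam s x.1 x.2.1 x.2.2.1 x.2.2.2 = -h)}
      = ↑(((univ : Finset (Fin l)) ×ˢ (univ : Finset (Fin l)) ×ˢ range B ×ˢ range B).filter
        (fun y => y.2.2.2 < (lam y.1).part y.2.2.1 ∧
          (chargedHook lam s y.1 y.2.1 y.2.2.1 y.2.2.2 = h ∨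
            chargedHook lam s y.1 y.2.1 y.2.2.1 y.2.2.2 = -h))) := by
    ext ⟨a, b, i, j⟩
    simp only [Set.mem_setOf_eq, Finset.coe_filter, Finset.mem_product, Finset.mem_univ,
      Finset.mem_range, true_and]
    constructor
    · rintro ⟨h1, h2⟩
      refine ⟨⟨?_, ?_⟩, h1, h2⟩
      · have hne : (lam a).part i ≠ 0 := by omega
        have hiM : i < M a - 1 := by
          by_contra hc
          push_neg at hc
          exact hne (hpz a i hc)
        have := hMmc a
        omega
      · have := hPci a i
        omega
    · rintro ⟨-, h1, h2⟩
      exact ⟨h1, h2⟩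
  have hpoint : ∀ (a b : Fin l) (i j : ℕ),
      (if (j < (lam a).part i ∧ (chargedHook lam s a b i j = h ∨ chargedHook lam s a b i j = -h))
        then (1:ℕ) else 0)
      = (if ufun (lam a) (s a) j < xfun (lam a) (s a) i ∧
            xfun (lam a) (s a) i - ufun (lam b) (s b) j = h then 1 else 0)
        + (if ufun (lam a) (s a) j < xfun (lam a) (s a) i ∧
            xfun (lam a) (s a) i - ufun (lam b) (s b) j = -h then 1 else 0) := by
    intro a b i j
    have hch := Stmt9.chargedHook_eq lam s a b i j
    have hnode := Stmt9.node_iff (lam a) (s a) i j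
    split_ifs <;> omega
  have hLHS : Set.ncard {x : Fin l × Fin l × ℕ × ℕ |
      x.2.2.2 < (lam x.1).part x.2.2.1 ∧
        (chargedHook lam s x.1 x.2.1 x.2.2.1 x.2.2.2 = h ∨
          chargedHook lam s x.1 x.2.1 x.2.2.1 x.2.2.2 = -h)}
      = ∑ a : Fin l, ∑ b : Fin l, ∑ i ∈ range B,
          (if xfun (lam a) (s a) i - h ∉ abacusSet (lam b) (s b) then (1:ℕ) else 0) := by
    rw [hLset, Set.ncard_coe_finset, Finset.card_filter]
    simp only [Finset.sum_product]
    have hT : ∀ a b : Fin l,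
        (∑ i ∈ range B, ∑ j ∈ range B,
          if (j < (lam a).part i ∧
              (chargedHook lam s a b i j = h ∨ chargedHook lam s a b i j = -h))
            then (1:ℕ) else 0)
        = (∑ i ∈ range B, ∑ j ∈ range B,
            if ufun (lam a) (s a) j < xfun (lam a) (s a) i ∧
                xfun (lam a) (s a) i - ufun (lam b) (s b) j = h then (1:ℕ) else 0)
          + (∑ i ∈ range B, ∑ j ∈ range B,
            if ufun (lam a) (s a) j < xfun (lam a) (s a) i ∧
                xfun (lam a) (s a) i - ufun (lam b) (s b) j = -h then (1:ℕ) else 0) := by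
      intro a b
      rw [← Finset.sum_add_distrib]
      apply Finset.sum_congr rfl
      intro i _
      rw [← Finset.sum_add_distrib]
      exact Finset.sum_congr rfl (fun j _ => hpoint a b i j)
    calc (∑ a : Fin l, ∑ b : Fin l, ∑ i ∈ range B, ∑ j ∈ range B,
          if (j < (lam a).part i ∧
              (chargedHook lam s a b i j = h ∨ chargedHook lam s a b i j = -h))
            then (1:ℕ) else 0)
        = (∑ a : Fin l, ∑ b : Fin l,
            ((∑ i ∈ range B, ∑ j ∈ range B,
              if ufun (lam a) (s a) j < xfun (lam a) (s a) i ∧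
                  xfun (lam a) (s a) i - ufun (lam b) (s b) j = h then (1:ℕ) else 0)
            + (∑ i ∈ range B, ∑ j ∈ range B,
              if ufun (lam a) (s a) j < xfun (lam a) (s a) i ∧
                  xfun (lam a) (s a) i - ufun (lam b) (s b) j = -h then (1:ℕ) else 0))) := by
          exact Finset.sum_congr rfl (fun a _ => Finset.sum_congr rfl (fun b _ => hT a b))
      _ = (∑ a : Fin l, ∑ b : Fin l, ∑ i ∈ range B, ∑ j ∈ range B,
            if ufun (lam a) (s a) j < xfun (lam a) (s a) i ∧
                xfun (lam a) (s a) i - ufun (lam b) (s b) j = h then (1:ℕ) else 0)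
          + (∑ a : Fin l, ∑ b : Fin l, ∑ i ∈ range B, ∑ j ∈ range B,
            if ufun (lam a) (s a) j < xfun (lam a) (s a) i ∧
                xfun (lam a) (s a) i - ufun (lam b) (s b) j = -h then (1:ℕ) else 0) := by
          simp only [Finset.sum_add_distrib]
      _ = (∑ a : Fin l, ∑ b : Fin l, ∑ i ∈ range B, ∑ j ∈ range B,
            if ufun (lam a) (s a) j < xfun (lam a) (s a) i ∧
                xfun (lam a) (s a) i - ufun (lam b) (s b) j = h then (1:ℕ) else 0)
          + (∑ a : Fin l, ∑ b : Fin l, ∑ i ∈ range B, ∑ j ∈ range B,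
            if ufun (lam b) (s b) j < xfun (lam b) (s b) i ∧
                xfun (lam b) (s b) i - ufun (lam a) (s a) j = -h then (1:ℕ) else 0) := by
          congr 1
          exact Finset.sum_comm
      _ = ∑ a : Fin l, ∑ b : Fin l,
            ((∑ i ∈ range B, ∑ j ∈ range B,
              if ufun (lam a) (s a) j < xfun (lam a) (s a) i ∧
                  xfun (lam a) (s a) i - ufun (lam b) (s b) j = h then (1:ℕ) else 0)
            + (∑ i ∈ range B, ∑ j ∈ range B,
              if ufun (lam b) (s b) j < xfun (lam b) (s b) i ∧
                  xfun (lam b) (s b) i - ufun (lam a) (s a) j = -h then (1:ℕ) else 0)) := by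
          simp only [Finset.sum_add_distrib]
      _ = ∑ a : Fin l, ∑ b : Fin l, ∑ i ∈ range B,
            (if xfun (lam a) (s a) i - h ∉ abacusSet (lam b) (s b) then (1:ℕ) else 0) := by
          exact Finset.sum_congr rfl (fun a _ => Finset.sum_congr rfl (fun b _ => hcore a b))
  -- RHS conversion
  have hRHS : (∑ c : Fin l, ∑ x ∈ betaFinset (lam c) (s c) m,
        Set.ncard {t : Fin l |
          x - h ∉ betaFinset (lam t) (s t) m ∧ -(m : ℤ) < x - h})
      = ∑ a : Fin l, ∑ b : Fin l, ∑ i ∈ range B,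
          (if xfun (lam a) (s a) i - h ∉ abacusSet (lam b) (s b) then (1:ℕ) else 0) := by
    apply Finset.sum_congr rfl
    intro c _
    have hsetT : ∀ x : ℤ, {t : Fin l | x - h ∉ betaFinset (lam t) (s t) m ∧ -(m:ℤ) < x - h}
        = ↑(univ.filter (fun t : Fin l => x - h ∉ abacusSet (lam t) (s t))) := by
      intro x
      ext t
      simp only [Set.mem_setOf_eq, Finset.coe_filter, Finset.mem_univ, true_and]
      exact Stmt9.cond_iff (lam t) (s t) m (hms t) (hzero t) (x - h)
    calc ∑ x ∈ betaFinset (lam c) (s c) m,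
          Set.ncard {t : Fin l | x - h ∉ betaFinset (lam t) (s t) m ∧ -(m:ℤ) < x - h}
        = ∑ x ∈ betaFinset (lam c) (s c) m, ∑ t : Fin l,
            (if x - h ∉ abacusSet (lam t) (s t) then (1:ℕ) else 0) := by
          apply Finset.sum_congr rfl
          intro x _
          rw [hsetT x, Set.ncard_coe_finset, Finset.card_filter]
      _ = ∑ i ∈ range (M c), ∑ t : Fin l,
            (if xfun (lam c) (s c) i - h ∉ abacusSet (lam t) (s t) then (1:ℕ) else 0) := by
          rw [show betaFinset (lam c) (s c) m
              = (range (M c)).image (xfun (lam c) (s c)) from rfl]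
          rw [Finset.sum_image
            (fun a1 _ a2 _ heq => (Stmt9.xfun_strictAnti (lam c) (s c)).injective heq)]
      _ = ∑ i ∈ range B, ∑ t : Fin l,
            (if xfun (lam c) (s c) i - h ∉ abacusSet (lam t) (s t) then (1:ℕ) else 0) := by
          apply Finset.sum_subset
          · apply Finset.range_subset_range.2
            have := hMmc c
            omega
          · intro i _ hiM
            rw [Finset.mem_range, not_lt] at hiM
            apply Finset.sum_eq_zero
            intro t _
            rw [if_neg]
            intro hc
            apply hc
            have hp0 : (lam c).part i = 0 := hpz c i (by omega)
            have hiz : ((M c : ℕ) : ℤ) ≤ (i : ℤ) := by exact_mod_cast hiM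
            have hxle : xfun (lam c) (s c) i - h ≤ -(m:ℤ) := by
              unfold Stmt9.xfun
              rw [hp0]
              have := hMc c
              push_cast
              omega
            exact (Stmt9.abacus_eq_beta (lam t) (s t) m (hms t) (hzero t) _).2 (Or.inr hxle)
      _ = ∑ t : Fin l, ∑ i ∈ range B,
            (if xfun (lam c) (s c) i - h ∉ abacusSet (lam t) (s t) then (1:ℕ) else 0) :=
          Finset.sum_comm
  rw [hLHS, hRHS]
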